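/- arXiv:2110.05214 — 3 statements merged into one kernel-verified Lean document; each statement's English description precedes it below -/
import Mathlib

section
/- (Proposition 2: Golay expansion of a ULA preserves the radiation pattern.) Let N, M ≥ 1, let (u, v) be a Golay complementary pair of unimodular sequences of length N, and let w_PA, w_PB : {0,…,M−1} → ℂ be arbitrary sequences. Define sequences w_A, w_B of length 2NM by: for 0 ≤ l ≤ N−1 and 0 ≤ m ≤ M−1, w_A(lM+m) = u(l)·w_PA(m), w_A(NM+lM+m) = −v(l)·conj(w_PB(M−1−m)), w_B(lM+m) = u(l)·w_PB(m), w_B(NM+lM+m) = v(l)·conj(w_PA(M−1−m)). Then for every ψ ∈ ℝ, |F_{w_A}(ψ)|² + |F_{w_B}(ψ)|² = 2N·( |F_{w_PA}(ψ)|² + |F_{w_PB}(ψ)|² ). -/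
/-- The array factor of a length-`M` sequence `u` at spatial frequency `ψ`:
`F_u(ψ) = Σ_{m=0}^{M-1} u(m) · exp(i·m·ψ)`. -/
noncomputable def arrayFactor (M : ℕ) (u : ℕ → ℂ) (ψ : ℝ) : ℂ :=
  ∑ m ∈ Finset.range M, u m * Complex.exp (Complex.I * (m : ℂ) * (ψ : ℂ))

/-- The aperiodic autocorrelation of a length-`M` sequence `u` at shift `τ`:
`R_u(τ) = Σ_{m=0}^{M-1-τ} u(m) · conj(u(m+τ))`. -/
noncomputable def aacf (M : ℕ) (u : ℕ → ℂ) (τ : ℕ) : ℂ :=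
  ∑ m ∈ Finset.range (M - τ), u m * (starRingEnd ℂ) (u (m + τ))

/-!
Cutting the expanded aperture into its two halves, each a Kronecker product, gives
`F_A = U P - z V conj Q` and `F_B = U Q + z V conj P`, where `P`, `Q` are the protoarray factors
at `ψ`, `U`, `V` those of `u`, `v` at `M ψ`, and `z = e^{i (NM + M - 1) ψ}` is the phase picked up
by reversing and conjugating a sequence. This is an Alamouti code, so
`|F_A|² + |F_B|² = (|U|² + |V|²) (|P|² + |Q|²)`. Finally `|F_u|²` is the Fourier transform of the
aperiodic autocorrelation of `u`, so for a Golay pair of unimodular sequences all off-peak terms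
cancel and `|U|² + |V|² = 2N`.
-/

open Finset ComplexConjugate

noncomputable def phasor (ψ : ℝ) (n : ℕ) : ℂ := Complex.exp (Complex.I * n * ψ)

lemma phasor_add (ψ : ℝ) (a b : ℕ) : phasor ψ (a + b) = phasor ψ a * phasor ψ b := by
  rw [phasor, phasor, phasor, ← Complex.exp_add]; push_cast; ring_nf

lemma phasor_mul (ψ : ℝ) (l M : ℕ) : phasor ψ (l * M) = phasor (M * ψ) l := by
  simp only [phasor]; push_cast; ring_nf

lemma norm_phasor (ψ : ℝ) (n : ℕ) : ‖phasor ψ n‖ = 1 := by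
  rw [phasor, show Complex.I * n * ψ = ((n * ψ : ℝ) : ℂ) * Complex.I by push_cast; ring]
  exact Complex.norm_exp_ofReal_mul_I _

lemma phasor_mul_conj (ψ : ℝ) (n : ℕ) : phasor ψ n * conj (phasor ψ n) = 1 := by
  rw [Complex.mul_conj', norm_phasor]; norm_num

lemma arrayFactor_eq_sum_phasor (M : ℕ) (u : ℕ → ℂ) (ψ : ℝ) :
    arrayFactor M u ψ = ∑ m ∈ range M, u m * phasor ψ m := rfl

lemma arrayFactor_neg (M : ℕ) (u : ℕ → ℂ) (ψ : ℝ) :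
    arrayFactor M (-u) ψ = -arrayFactor M u ψ := by
  simp only [arrayFactor, Pi.neg_apply, neg_mul, sum_neg_distrib]

lemma arrayFactor_add_length (K L : ℕ) (w : ℕ → ℂ) (ψ : ℝ) :
    arrayFactor (K + L) w ψ =
      arrayFactor K w ψ + phasor ψ K * arrayFactor L (fun n => w (K + n)) ψ := by
  simp only [arrayFactor_eq_sum_phasor, sum_range_add, phasor_add, mul_sum]
  congr 1
  exact sum_congr rfl fun _ _ => by ring

lemma arrayFactor_kronecker {N M : ℕ} {w x p : ℕ → ℂ}
    (hw : ∀ l < N, ∀ m < M, w (l * M + m) = x l * p m) (ψ : ℝ) :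
    arrayFactor (N * M) w ψ = arrayFactor N x (M * ψ) * arrayFactor M p ψ := by
  simp only [arrayFactor_eq_sum_phasor, sum_mul_sum, ← phasor_mul]
  induction N with
  | zero => simp
  | succ n ih =>
    rw [Nat.succ_mul, sum_range_add, ih fun l hl => hw l (by omega), sum_range_succ]
    congr 1
    refine sum_congr rfl fun m hm => ?_
    rw [hw n (by omega) m (mem_range.mp hm), phasor_add]
    ring

lemma arrayFactor_conj_reverse (M : ℕ) (w : ℕ → ℂ) (ψ : ℝ) :
    arrayFactor M (fun m => conj (w (M - 1 - m))) ψ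
      = phasor ψ (M - 1) * conj (arrayFactor M w ψ) := by
  simp only [arrayFactor_eq_sum_phasor, map_sum, map_mul, mul_sum]
  rw [← sum_range_reflect]
  refine sum_congr rfl fun m hm => ?_
  have hm := mem_range.mp hm
  have hsplit : phasor ψ (M - 1) = phasor ψ (M - 1 - m) * phasor ψ m := by
    rw [← phasor_add]; congr 1; omega
  rw [Nat.sub_sub_self (by omega : m ≤ M - 1), hsplit]
  linear_combination -(conj (w m) * phasor ψ (M - 1 - m)) * phasor_mul_conj ψ m

lemma sum_range_sum_range_lt_eq_sum_Ico_shift {β : Type*} [AddCommMonoid β] (N : ℕ)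
    (g : ℕ → ℕ → β) :
    ∑ a ∈ range N, ∑ b ∈ range a, g a b
      = ∑ τ ∈ Ico 1 N, ∑ m ∈ range (N - τ), g (m + τ) m := by
  rw [sum_sigma', sum_sigma']
  apply sum_nbij' (fun x => (⟨x.1 - x.2, x.2⟩ : (_ : ℕ) × ℕ))
    (fun y => (⟨y.2 + y.1, y.2⟩ : (_ : ℕ) × ℕ)) <;>
    intro a ha <;> simp only [mem_sigma, mem_range, mem_Ico] at ha ⊢
  · omega
  · omega
  · ext <;> simp; omega
  · ext <;> simp
  · congr 1; omega

lemma sum_range_sum_range_eq_diag_add_lower_add_upper {β : Type*} [AddCommMonoid β] (N : ℕ)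
    (g : ℕ → ℕ → β) :
    ∑ a ∈ range N, ∑ b ∈ range N, g a b
      = ∑ a ∈ range N, g a a + ∑ a ∈ range N, ∑ b ∈ range a, g a b
        + ∑ a ∈ range N, ∑ b ∈ range a, g b a := by
  have hrow : ∀ a ∈ range N, ∑ b ∈ range N, g a b
      = g a a + ∑ b ∈ range a, g a b + ∑ b ∈ Ico (a + 1) N, g a b := by
    intro a ha
    have ha := mem_range.mp ha
    rw [range_eq_Ico, ← sum_Ico_consecutive _ (Nat.zero_le a) ha.le,
      sum_eq_sum_Ico_succ_bot ha, ← range_eq_Ico]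
    abel
  rw [sum_congr rfl hrow, sum_add_distrib, sum_add_distrib]
  congr 1
  exact sum_comm' fun a b => by simp only [mem_range, mem_Ico]; omega

lemma arrayFactor_mul_conj (N : ℕ) (u : ℕ → ℂ) (θ : ℝ) :
    arrayFactor N u θ * conj (arrayFactor N u θ)
      = ∑ m ∈ range N, u m * conj (u m)
        + ∑ τ ∈ Ico 1 N, (conj (aacf N u τ) * phasor θ τ + aacf N u τ * conj (phasor θ τ)) := by
  have hshift : ∀ m τ, phasor θ (m + τ) * conj (phasor θ m) = phasor θ τ := fun m τ => by
    rw [phasor_add]; linear_combination phasor θ τ * phasor_mul_conj θ m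
  rw [arrayFactor_eq_sum_phasor, map_sum, sum_mul_sum,
    sum_range_sum_range_eq_diag_add_lower_add_upper, sum_range_sum_range_lt_eq_sum_Ico_shift,
    sum_range_sum_range_lt_eq_sum_Ico_shift, sum_add_distrib, add_assoc]
  congr 1
  · exact sum_congr rfl fun m _ => by
      rw [map_mul]; linear_combination u m * conj (u m) * phasor_mul_conj θ m
  congr 1 <;> refine sum_congr rfl fun τ _ => ?_ <;>
    simp only [aacf, map_sum, sum_mul] <;> refine sum_congr rfl fun m _ => ?_ <;>
    simp only [map_mul, Complex.conj_conj]
  · linear_combination u (m + τ) * conj (u m) * hshift m τ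
  · have hshift' : phasor θ m * conj (phasor θ (m + τ)) = conj (phasor θ τ) := by
      simpa only [map_mul, Complex.conj_conj, mul_comm] using congrArg conj (hshift m τ)
    linear_combination u m * conj (u (m + τ)) * hshift'

lemma norm_sq_arrayFactor_add_of_golay {N : ℕ} {u v : ℕ → ℂ}
    (hu : ∀ l < N, ‖u l‖ = 1) (hv : ∀ l < N, ‖v l‖ = 1)
    (hGolay : ∀ τ, 1 ≤ τ → τ < N → aacf N u τ + aacf N v τ = 0) (θ : ℝ) :
    ‖arrayFactor N u θ‖ ^ 2 + ‖arrayFactor N v θ‖ ^ 2 = 2 * N := by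
  apply Complex.ofReal_injective
  push_cast
  rw [← Complex.mul_conj', ← Complex.mul_conj', arrayFactor_mul_conj, arrayFactor_mul_conj]
  calc _ = ∑ m ∈ range N, (u m * conj (u m) + v m * conj (v m))
        + ∑ τ ∈ Ico 1 N, (conj (aacf N u τ + aacf N v τ) * phasor θ τ
          + (aacf N u τ + aacf N v τ) * conj (phasor θ τ)) := by
        simp only [map_add, add_mul, sum_add_distrib]; ring
    _ = ∑ m ∈ range N, (2 : ℂ) + ∑ τ ∈ Ico 1 N, (0 : ℂ) := by
        congr 1 <;> refine sum_congr rfl fun m hm => ?_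
        · rw [Complex.mul_conj', Complex.mul_conj', hu m (mem_range.mp hm),
            hv m (mem_range.mp hm)]
          norm_num
        · obtain ⟨h1, h2⟩ := mem_Ico.mp hm
          rw [hGolay m h1 h2]; simp
    _ = 2 * N := by simp [mul_comm]

lemma norm_sq_alamouti (a b c d z : ℂ) (hz : ‖z‖ = 1) :
    ‖a * c - z * b * conj d‖ ^ 2 + ‖a * d + z * b * conj c‖ ^ 2
      = (‖a‖ ^ 2 + ‖b‖ ^ 2) * (‖c‖ ^ 2 + ‖d‖ ^ 2) := by
  have hz' : z * conj z = 1 := by rw [Complex.mul_conj', hz]; norm_num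
  apply Complex.ofReal_injective
  push_cast
  simp only [← Complex.mul_conj', map_sub, map_add, map_mul, Complex.conj_conj]
  linear_combination b * conj b * (c * conj c + d * conj d) * hz'

theorem golay_expansion_preserves_pattern_general (N M : ℕ)
    (u v wPA wPB wA wB : ℕ → ℂ)
    (hu : ∀ l < N, ‖u l‖ = 1) (hv : ∀ l < N, ‖v l‖ = 1)
    (hGolay : ∀ τ, 1 ≤ τ → τ < N → aacf N u τ + aacf N v τ = 0)
    (hA1 : ∀ l < N, ∀ m < M, wA (l * M + m) = u l * wPA m)
    (hA2 : ∀ l < N, ∀ m < M,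
      wA (N * M + l * M + m) = -(v l * (starRingEnd ℂ) (wPB (M - 1 - m))))
    (hB1 : ∀ l < N, ∀ m < M, wB (l * M + m) = u l * wPB m)
    (hB2 : ∀ l < N, ∀ m < M,
      wB (N * M + l * M + m) = v l * (starRingEnd ℂ) (wPA (M - 1 - m)))
    (ψ : ℝ) :
    ‖arrayFactor (2 * N * M) wA ψ‖ ^ 2 +
        ‖arrayFactor (2 * N * M) wB ψ‖ ^ 2 =
      2 * N * (‖arrayFactor M wPA ψ‖ ^ 2 +
                ‖arrayFactor M wPB ψ‖ ^ 2) := by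
  set z := phasor ψ (N * M) * phasor ψ (M - 1)
  have hz : ‖z‖ = 1 := by simp only [z, norm_mul, norm_phasor, mul_one]
  have hlen : 2 * N * M = N * M + N * M := by ring
  have hFA : arrayFactor (2 * N * M) wA ψ = arrayFactor N u (M * ψ) * arrayFactor M wPA ψ
      - z * arrayFactor N v (M * ψ) * conj (arrayFactor M wPB ψ) := by
    rw [hlen, arrayFactor_add_length, arrayFactor_kronecker hA1,
      arrayFactor_kronecker (x := -v) (p := fun m => conj (wPB (M - 1 - m)))
        fun l hl m hm => by rw [← add_assoc, hA2 l hl m hm, Pi.neg_apply, neg_mul],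
      arrayFactor_neg, arrayFactor_conj_reverse]
    ring
  have hFB : arrayFactor (2 * N * M) wB ψ = arrayFactor N u (M * ψ) * arrayFactor M wPB ψ
      + z * arrayFactor N v (M * ψ) * conj (arrayFactor M wPA ψ) := by
    rw [hlen, arrayFactor_add_length, arrayFactor_kronecker hB1,
      arrayFactor_kronecker (p := fun m => conj (wPA (M - 1 - m)))
        fun l hl m hm => by rw [← add_assoc, hB2 l hl m hm],
      arrayFactor_conj_reverse]
    ring
  rw [hFA, hFB, norm_sq_alamouti _ _ _ _ _ hz, norm_sq_arrayFactor_add_of_golay hu hv hGolay]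

/-- Proposition 2: expansion of a ULA by a Golay complementary pair of expanders
preserves (up to the scaling `2N`) the sum power pattern of the protoarray. -/
theorem golay_expansion_preserves_pattern (N M : ℕ) (hN : 1 ≤ N) (hM : 1 ≤ M)
    (u v wPA wPB wA wB : ℕ → ℂ)
    (hu : ∀ l < N, ‖u l‖ = 1) (hv : ∀ l < N, ‖v l‖ = 1)
    (hGolay : ∀ τ, 1 ≤ τ → τ < N → aacf N u τ + aacf N v τ = 0)
    (hA1 : ∀ l < N, ∀ m < M, wA (l * M + m) = u l * wPA m)
    (hA2 : ∀ l < N, ∀ m < M,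
      wA (N * M + l * M + m) = -(v l * (starRingEnd ℂ) (wPB (M - 1 - m))))
    (hB1 : ∀ l < N, ∀ m < M, wB (l * M + m) = u l * wPB m)
    (hB2 : ∀ l < N, ∀ m < M,
      wB (N * M + l * M + m) = v l * (starRingEnd ℂ) (wPA (M - 1 - m)))
    (ψ : ℝ) :
    ‖arrayFactor (2 * N * M) wA ψ‖ ^ 2 +
        ‖arrayFactor (2 * N * M) wB ψ‖ ^ 2 =
      2 * N * (‖arrayFactor M wPA ψ‖ ^ 2 +
                ‖arrayFactor M wPB ψ‖ ^ 2) :=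
  golay_expansion_preserves_pattern_general N M u v wPA wPB wA wB hu hv hGolay hA1 hA2 hB1 hB2 ψ
end

section
/- (Proposition 4, vertical variant: expansion of a URA by a Golay array pair.) Let L, K, N, M ≥ 1, let (U, V) be a Golay complementary array pair of unimodular L×K matrices, and let W_PA, W_PB : {0,…,N−1}×{0,…,M−1} → ℂ be arbitrary matrices. Define 2LN×KM matrices W_A, W_B by: for 0 ≤ l ≤ L−1, 0 ≤ k ≤ K−1, 0 ≤ n ≤ N−1, 0 ≤ m ≤ M−1, W_A(lN+n, kM+m) = U(l,k)·W_PA(n,m), W_A(LN+lN+n, kM+m) = −V(l,k)·conj(W_PB(N−1−n, M−1−m)), W_B(lN+n, kM+m) = U(l,k)·W_PB(n,m), W_B(LN+lN+n, kM+m) = V(l,k)·conj(W_PA(N−1−n, M−1−m)). Then for all ψ_y, ψ_z ∈ ℝ, |F_{W_A}(ψ_y,ψ_z)|² + |F_{W_B}(ψ_y,ψ_z)|² = 2LK·( |F_{W_PA}(ψ_y,ψ_z)|² + |F_{W_PB}(ψ_y,ψ_z)|² ). -/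
/-- The two-dimensional array factor of an `N×M` matrix `W` at `(ψ_y, ψ_z)`:
`F_W(ψ_y,ψ_z) = Σ_{n=0}^{N-1} Σ_{m=0}^{M-1} W(n,m) · exp(i·(n·ψ_z + m·ψ_y))`. -/
noncomputable def arrayFactor2 (N M : ℕ) (W : ℕ → ℕ → ℂ) (ψy ψz : ℝ) : ℂ :=
  ∑ n ∈ Finset.range N, ∑ m ∈ Finset.range M,
    W n m * Complex.exp (Complex.I * ((n : ℂ) * (ψz : ℂ) + (m : ℂ) * (ψy : ℂ)))

/-- The two-dimensional aperiodic autocorrelation of an `N×M` matrix `W` at integer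
shifts `(τ_n, τ_m)`: the sum of `W(n,m)·conj(W(n+τ_n, m+τ_m))` over all pairs
`(n,m)` with `0 ≤ n, n+τ_n ≤ N−1` and `0 ≤ m, m+τ_m ≤ M−1`. -/
noncomputable def aacf2 (N M : ℕ) (W : ℕ → ℕ → ℂ) (τn τm : ℤ) : ℂ :=
  ∑ n ∈ Finset.range N, ∑ m ∈ Finset.range M,
    if 0 ≤ (n : ℤ) + τn ∧ (n : ℤ) + τn < (N : ℤ) ∧
        0 ≤ (m : ℤ) + τm ∧ (m : ℤ) + τm < (M : ℤ) then
      W n m * (starRingEnd ℂ) (W ((n : ℤ) + τn).toNat ((m : ℤ) + τm).toNat)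
    else 0

/-- `(U, V)` is a Golay complementary array pair of `N×M` matrices: the sum of their
two-dimensional aperiodic autocorrelations vanishes at every nonzero shift. -/
def IsGolayArrayPair (N M : ℕ) (U V : ℕ → ℕ → ℂ) : Prop :=
  ∀ τn τm : ℤ, |τn| ≤ (N : ℤ) - 1 → |τm| ≤ (M : ℤ) - 1 → ¬(τn = 0 ∧ τm = 0) →
    aacf2 N M U τn τm + aacf2 N M V τn τm = 0

open Finset Complex ComplexConjugate

theorem sum_range_product_eq_sum_shift {β : Type*} [AddCommMonoid β] {N M n m : ℕ}
    (hn : n < N) (hm : m < M) (f : ℕ × ℕ → β) :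
    ∑ p ∈ range N ×ˢ range M, f p =
      ∑ τ ∈ Icc (1 - (N : ℤ)) (N - 1) ×ˢ Icc (1 - (M : ℤ)) (M - 1),
        if 0 ≤ (n : ℤ) + τ.1 ∧ (n : ℤ) + τ.1 < N ∧ 0 ≤ (m : ℤ) + τ.2 ∧ (m : ℤ) + τ.2 < M then
          f (((n : ℤ) + τ.1).toNat, ((m : ℤ) + τ.2).toNat)
        else 0 := by
  rw [← sum_filter]
  refine sum_nbij' (fun p ↦ ((p.1 : ℤ) - n, (p.2 : ℤ) - m))
    (fun τ ↦ (((n : ℤ) + τ.1).toNat, ((m : ℤ) + τ.2).toNat)) ?_ ?_ ?_ ?_ ?_ <;>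
    simp only [mem_product, mem_range, mem_filter, mem_Icc, Prod.forall, Prod.mk.injEq,
      add_sub_cancel, Int.toNat_natCast, implies_true] <;>
    omega

theorem arrayFactor2_eq_sum_product (N M : ℕ) (W : ℕ → ℕ → ℂ) (ψy ψz : ℝ) :
    arrayFactor2 N M W ψy ψz = ∑ p ∈ range N ×ˢ range M,
      W p.1 p.2 * exp (I * ((p.1 : ℂ) * ψz + (p.2 : ℂ) * ψy)) := by
  rw [arrayFactor2, sum_product]

theorem arrayFactor2_mul_conj (N M : ℕ) (W : ℕ → ℕ → ℂ) (ψy ψz : ℝ) :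
    arrayFactor2 N M W ψy ψz * conj (arrayFactor2 N M W ψy ψz) =
      ∑ τ ∈ Icc (1 - (N : ℤ)) (N - 1) ×ˢ Icc (1 - (M : ℤ)) (M - 1),
        aacf2 N M W τ.1 τ.2 * exp (-I * ((τ.1 : ℂ) * ψz + (τ.2 : ℂ) * ψy)) := by
  rw [arrayFactor2_eq_sum_product, map_sum, sum_mul_sum]
  conv_rhs =>
    simp only [aacf2, ← sum_product', sum_mul, ite_zero_mul]
    rw [sum_product_right]
  refine sum_congr rfl fun p hp ↦ ?_
  rw [mem_product, mem_range, mem_range] at hp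
  rw [sum_range_product_eq_sum_shift hp.1 hp.2]
  refine sum_congr rfl fun τ _ ↦ ?_
  split_ifs with h
  · have hn : ((((p.1 : ℤ) + τ.1).toNat : ℕ) : ℂ) = p.1 + τ.1 := by
      exact_mod_cast Int.toNat_of_nonneg h.1
    have hm : ((((p.2 : ℤ) + τ.2).toNat : ℕ) : ℂ) = p.2 + τ.2 := by
      exact_mod_cast Int.toNat_of_nonneg h.2.2.1
    simp only [map_mul, ← exp_conj, map_add, conj_I, conj_natCast, map_intCast, conj_ofReal,
      hn, hm]
    rw [mul_mul_mul_comm, ← exp_add]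
    ring_nf
  · rfl

theorem aacf2_zero_zero {N M : ℕ} {W : ℕ → ℕ → ℂ} (hW : ∀ n < N, ∀ m < M, ‖W n m‖ = 1) :
    aacf2 N M W 0 0 = N * M := by
  rw [aacf2]
  calc _ = ∑ n ∈ range N, ∑ m ∈ range M, (1 : ℂ) := by
        refine sum_congr rfl fun n hn ↦ sum_congr rfl fun m hm ↦ ?_
        rw [mem_range] at hn hm
        rw [if_pos (by omega)]
        simp [mul_conj', hW n hn m hm]
    _ = N * M := by simp

theorem IsGolayArrayPair.norm_sq_add_norm_sq_arrayFactor2 {L K : ℕ} {U V : ℕ → ℕ → ℂ}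
    (hL : 0 < L) (hK : 0 < K) (hU : ∀ l < L, ∀ k < K, ‖U l k‖ = 1)
    (hV : ∀ l < L, ∀ k < K, ‖V l k‖ = 1) (hG : IsGolayArrayPair L K U V) (ψy ψz : ℝ) :
    ‖arrayFactor2 L K U ψy ψz‖ ^ 2 + ‖arrayFactor2 L K V ψy ψz‖ ^ 2 = 2 * L * K := by
  apply ofReal_injective
  push_cast
  rw [← mul_conj', ← mul_conj', arrayFactor2_mul_conj, arrayFactor2_mul_conj, ← sum_add_distrib,
    sum_eq_single_of_mem ((0 : ℤ), (0 : ℤ))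
      (by simp only [mem_product, mem_Icc]; omega)]
  · simp only [aacf2_zero_zero hU, aacf2_zero_zero hV, Int.cast_zero, zero_mul, add_zero,
      mul_zero, exp_zero, mul_one]
    ring
  · rintro ⟨τn, τm⟩ hτ hne
    rw [mem_product, mem_Icc, mem_Icc] at hτ
    rw [← add_mul, hG τn τm (by rw [abs_le]; omega) (by rw [abs_le]; omega)
      (by simpa using hne), zero_mul]

theorem sum_range_mul_eq_sum_sum {β : Type*} [AddCommMonoid β] (a b : ℕ) (f : ℕ → β) :
    ∑ x ∈ range (a * b), f x = ∑ i ∈ range a, ∑ j ∈ range b, f (i * b + j) := by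
  induction a with
  | zero => simp
  | succ a ih => rw [Nat.succ_mul, sum_range_add, ih, sum_range_succ]

theorem arrayFactor2_add_rows (R R' C : ℕ) (W : ℕ → ℕ → ℂ) (ψy ψz : ℝ) :
    arrayFactor2 (R + R') C W ψy ψz = arrayFactor2 R C W ψy ψz +
      exp (I * ((R : ℂ) * ψz)) * arrayFactor2 R' C (fun r c ↦ W (R + r) c) ψy ψz := by
  rw [arrayFactor2, sum_range_add, arrayFactor2, arrayFactor2, mul_sum]
  congr 1
  refine sum_congr rfl fun r _ ↦ ?_
  rw [mul_sum]
  refine sum_congr rfl fun c _ ↦ ?_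
  rw [mul_left_comm, ← exp_add]
  push_cast
  ring_nf

theorem arrayFactor2_kronecker {L K N M : ℕ} {X P W : ℕ → ℕ → ℂ}
    (hW : ∀ l < L, ∀ k < K, ∀ n < N, ∀ m < M, W (l * N + n) (k * M + m) = X l k * P n m)
    (ψy ψz : ℝ) :
    arrayFactor2 (L * N) (K * M) W ψy ψz =
      arrayFactor2 L K X (M * ψy) (N * ψz) * arrayFactor2 N M P ψy ψz := by
  simp only [arrayFactor2, sum_range_mul_eq_sum_sum, sum_mul_sum]
  refine sum_congr rfl fun l hl ↦ sum_congr rfl fun n hn ↦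
    sum_congr rfl fun k hk ↦ sum_congr rfl fun m hm ↦ ?_
  rw [mem_range] at hl hn hk hm
  rw [hW l hl k hk n hn m hm, mul_mul_mul_comm, ← exp_add]
  push_cast
  ring_nf

theorem arrayFactor2_neg (N M : ℕ) (W : ℕ → ℕ → ℂ) (ψy ψz : ℝ) :
    arrayFactor2 N M (fun n m ↦ -W n m) ψy ψz = -arrayFactor2 N M W ψy ψz := by
  simp only [arrayFactor2, neg_mul, sum_neg_distrib]

theorem arrayFactor2_conj_reverse (N M : ℕ) (Q : ℕ → ℕ → ℂ) (ψy ψz : ℝ) :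
    arrayFactor2 N M (fun n m ↦ conj (Q (N - 1 - n) (M - 1 - m))) ψy ψz =
      exp (I * (((N : ℂ) - 1) * ψz + ((M : ℂ) - 1) * ψy)) *
        conj (arrayFactor2 N M Q ψy ψz) := by
  rw [arrayFactor2, ← sum_range_reflect, arrayFactor2, map_sum, mul_sum]
  refine sum_congr rfl fun n hn ↦ ?_
  rw [← sum_range_reflect, map_sum, mul_sum]
  refine sum_congr rfl fun m hm ↦ ?_
  rw [mem_range] at hn hm
  rw [show N - 1 - (N - 1 - n) = n by omega, show M - 1 - (M - 1 - m) = m by omega, map_mul,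
    ← exp_conj, mul_left_comm, ← exp_add]
  push_cast [Nat.cast_sub (show n ≤ N - 1 by omega), Nat.cast_sub (show m ≤ M - 1 by omega),
    Nat.cast_sub (show 1 ≤ N by omega), Nat.cast_sub (show 1 ≤ M by omega)]
  simp only [map_add, map_mul, conj_I, conj_natCast, conj_ofReal]
  ring_nf

theorem norm_sq_add_norm_sq_alamouti {a v p q φ : ℂ} (hφ : ‖φ‖ = 1) :
    ‖a * p - φ * (v * conj q)‖ ^ 2 + ‖a * q + φ * (v * conj p)‖ ^ 2 =
      (‖a‖ ^ 2 + ‖v‖ ^ 2) * (‖p‖ ^ 2 + ‖q‖ ^ 2) := by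
  apply ofReal_injective
  have hφ' : φ * conj φ = 1 := by rw [mul_conj', hφ]; simp
  push_cast
  simp only [← mul_conj', map_sub, map_add, map_mul, conj_conj]
  linear_combination (v * conj v * (p * conj p + q * conj q)) * hφ'

theorem ura_expansion_vertical_general (L K N M : ℕ)
    (hL : 1 ≤ L) (hK : 1 ≤ K)
    (U V WPA WPB WA WB : ℕ → ℕ → ℂ)
    (hU : ∀ l < L, ∀ k < K, ‖U l k‖ = 1)
    (hV : ∀ l < L, ∀ k < K, ‖V l k‖ = 1)
    (hGolay : IsGolayArrayPair L K U V)
    (hA1 : ∀ l < L, ∀ k < K, ∀ n < N, ∀ m < M,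
      WA (l * N + n) (k * M + m) = U l k * WPA n m)
    (hA2 : ∀ l < L, ∀ k < K, ∀ n < N, ∀ m < M,
      WA (L * N + l * N + n) (k * M + m) =
        -(V l k * (starRingEnd ℂ) (WPB (N - 1 - n) (M - 1 - m))))
    (hB1 : ∀ l < L, ∀ k < K, ∀ n < N, ∀ m < M,
      WB (l * N + n) (k * M + m) = U l k * WPB n m)
    (hB2 : ∀ l < L, ∀ k < K, ∀ n < N, ∀ m < M,
      WB (L * N + l * N + n) (k * M + m) =
        V l k * (starRingEnd ℂ) (WPA (N - 1 - n) (M - 1 - m)))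
    (ψy ψz : ℝ) :
    ‖arrayFactor2 (2 * L * N) (K * M) WA ψy ψz‖ ^ 2 +
        ‖arrayFactor2 (2 * L * N) (K * M) WB ψy ψz‖ ^ 2 =
      2 * L * K * (‖arrayFactor2 N M WPA ψy ψz‖ ^ 2 +
                    ‖arrayFactor2 N M WPB ψy ψz‖ ^ 2) := by
  set φ := exp (I * ((L * N : ℕ) * ψz)) * exp (I * (((N : ℂ) - 1) * ψz + ((M : ℂ) - 1) * ψy))
  have hφ : ‖φ‖ = 1 := by
    rw [norm_mul, ← ofReal_natCast, ← ofReal_mul, norm_exp_I_mul_ofReal, one_mul]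
    exact_mod_cast norm_exp_I_mul_ofReal ((N - 1) * ψz + (M - 1) * ψy)
  have h2LN : 2 * L * N = L * N + L * N := by ring
  have hA : arrayFactor2 (2 * L * N) (K * M) WA ψy ψz =
      arrayFactor2 L K U (M * ψy) (N * ψz) * arrayFactor2 N M WPA ψy ψz -
        φ * (arrayFactor2 L K V (M * ψy) (N * ψz) * conj (arrayFactor2 N M WPB ψy ψz)) := by
    rw [h2LN, arrayFactor2_add_rows, arrayFactor2_kronecker hA1,
      arrayFactor2_kronecker (P := fun n m ↦ -conj (WPB (N - 1 - n) (M - 1 - m)))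
        fun l hl k hk n hn m hm ↦ by rw [← add_assoc, hA2 l hl k hk n hn m hm, mul_neg],
      arrayFactor2_neg, arrayFactor2_conj_reverse]
    ring
  have hB : arrayFactor2 (2 * L * N) (K * M) WB ψy ψz =
      arrayFactor2 L K U (M * ψy) (N * ψz) * arrayFactor2 N M WPB ψy ψz +
        φ * (arrayFactor2 L K V (M * ψy) (N * ψz) * conj (arrayFactor2 N M WPA ψy ψz)) := by
    rw [h2LN, arrayFactor2_add_rows, arrayFactor2_kronecker hB1,
      arrayFactor2_kronecker (P := fun n m ↦ conj (WPA (N - 1 - n) (M - 1 - m)))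
        fun l hl k hk n hn m hm ↦ by rw [← add_assoc, hB2 l hl k hk n hn m hm],
      arrayFactor2_conj_reverse]
    ring
  rw [hA, hB, norm_sq_add_norm_sq_alamouti hφ,
    hGolay.norm_sq_add_norm_sq_arrayFactor2 hL hK hU hV]

/-- Proposition 4, vertical variant: expanding a two-dimensional protoarray by a
Golay complementary array pair of expanders, stacking vertically, yields an array
whose sum power pattern is `2LK` times that of the protoarray. -/
theorem ura_expansion_vertical (L K N M : ℕ)
    (hL : 1 ≤ L) (hK : 1 ≤ K) (hN : 1 ≤ N) (hM : 1 ≤ M)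
    (U V WPA WPB WA WB : ℕ → ℕ → ℂ)
    (hU : ∀ l < L, ∀ k < K, ‖U l k‖ = 1)
    (hV : ∀ l < L, ∀ k < K, ‖V l k‖ = 1)
    (hGolay : IsGolayArrayPair L K U V)
    (hA1 : ∀ l < L, ∀ k < K, ∀ n < N, ∀ m < M,
      WA (l * N + n) (k * M + m) = U l k * WPA n m)
    (hA2 : ∀ l < L, ∀ k < K, ∀ n < N, ∀ m < M,
      WA (L * N + l * N + n) (k * M + m) =
        -(V l k * (starRingEnd ℂ) (WPB (N - 1 - n) (M - 1 - m))))
    (hB1 : ∀ l < L, ∀ k < K, ∀ n < N, ∀ m < M,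
      WB (l * N + n) (k * M + m) = U l k * WPB n m)
    (hB2 : ∀ l < L, ∀ k < K, ∀ n < N, ∀ m < M,
      WB (L * N + l * N + n) (k * M + m) =
        V l k * (starRingEnd ℂ) (WPA (N - 1 - n) (M - 1 - m)))
    (ψy ψz : ℝ) :
    ‖arrayFactor2 (2 * L * N) (K * M) WA ψy ψz‖ ^ 2 +
        ‖arrayFactor2 (2 * L * N) (K * M) WB ψy ψz‖ ^ 2 =
      2 * L * K * (‖arrayFactor2 N M WPA ψy ψz‖ ^ 2 +
                    ‖arrayFactor2 N M WPB ψy ψz‖ ^ 2) :=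
  ura_expansion_vertical_general L K N M hL hK U V WPA WPB WA WB hU hV hGolay hA1 hA2 hB1 hB2 ψy ψz
end

section
/- (Golay-array-pair closure under two-dimensional expansion.) Let L, K, N, M ≥ 1, let (U, V) be a Golay complementary array pair of unimodular L×K matrices, and let (W_PA, W_PB) be a Golay complementary array pair of unimodular N×M matrices. Define 2LN×KM matrices W_A, W_B by: for 0 ≤ l ≤ L−1, 0 ≤ k ≤ K−1, 0 ≤ n ≤ N−1, 0 ≤ m ≤ M−1, W_A(lN+n, kM+m) = U(l,k)·W_PA(n,m), W_A(LN+lN+n, kM+m) = −V(l,k)·conj(W_PB(N−1−n, M−1−m)), W_B(lN+n, kM+m) = U(l,k)·W_PB(n,m), W_B(LN+lN+n, kM+m) = V(l,k)·conj(W_PA(N−1−n, M−1−m)). Then (W_A, W_B) is itself a Golay complementary array pair of unimodular 2LN×KM matrices. -/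
/-!
Encode an `N × M` array `W` as the Laurent polynomial `W(X, Y) = Σ W(n, m) Xⁿ Yᵐ` in `ℂ[ℤ × ℤ]`
and let `W*(X, Y) = conj W(X⁻¹, Y⁻¹)`. The coefficients of `W W*` are the aperiodic
autocorrelations of `W`, so `(U, V)` is a Golay pair iff `U U* + V V*` is a constant.
With `U'`, `V'` obtained from `U`, `V` by `X ↦ Xᴺ, Y ↦ Yᴹ` and the monomial
`w = X^(LN + N - 1) Y^(M - 1)`, the expanded arrays are `W_A = U' P_A - w V' P_B*` and
`W_B = U' P_B + w V' P_A*`. Since `w w* = 1`, the cross terms cancel by commutativity and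
`W_A W_A* + W_B W_B* = (U' U'* + V' V'*) (P_A P_A* + P_B P_B*)`, a product of constants.
-/

open Finset AddMonoidAlgebra ComplexConjugate

theorem Finset.sum_range_mul {β : Type*} [AddCommMonoid β] (f : ℕ → β) (L N : ℕ) :
    ∑ x ∈ range (L * N), f x = ∑ l ∈ range L, ∑ n ∈ range N, f (l * N + n) := by
  induction L with
  | zero => simp
  | succ L ih => rw [Nat.succ_mul, sum_range_add, ih, sum_range_succ]

theorem mul_map_add_mul_map_expansion {R : Type*} [CommRing R] (σ : R →+* R)
    (hσ : Function.Involutive σ) {u v a b w : R} (hw : w * σ w = 1) :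
    (u * a - w * v * σ b) * σ (u * a - w * v * σ b)
        + (u * b + w * v * σ a) * σ (u * b + w * v * σ a)
      = (u * σ u + v * σ v) * (a * σ a + b * σ b) := by
  simp only [map_sub, map_add, map_mul, hσ _]
  linear_combination v * σ v * (a * σ a + b * σ b) * hw

section ConjRev

variable {G : Type*} [AddCommGroup G]

/-- `f(X) ↦ conj f(X⁻¹)`. -/
noncomputable def conjRev : ℂ[G] →+* ℂ[G] :=
  (mapRingHom G (starRingEnd ℂ)).comp (mapDomainRingHom ℂ negAddMonoidHom)

@[simp]
theorem conjRev_single (g : G) (r : ℂ) : conjRev (single g r) = single (-g) (conj r) := by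
  simp [conjRev]

theorem conjRev_involutive : Function.Involutive (conjRev : ℂ[G] →+* ℂ[G]) := by
  intro x
  induction x using AddMonoidAlgebra.induction_linear with
  | zero => simp
  | add x y hx hy => rw [map_add, map_add, hx, hy]
  | single g r => simp

theorem single_one_mul_conjRev (g : G) : single g (1 : ℂ) * conjRev (single g 1) = 1 := by
  simp [single_mul_single, one_def]

end ConjRev

noncomputable def laurent (N M : ℕ) (W : ℕ → ℕ → ℂ) : ℂ[ℤ × ℤ] :=
  ∑ n ∈ range N, ∑ m ∈ range M, single ((n : ℤ), (m : ℤ)) (W n m)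

/-- The substitution `X ↦ Xᴺ, Y ↦ Yᴹ`. -/
noncomputable def dilate (N M : ℕ) : ℂ[ℤ × ℤ] →+* ℂ[ℤ × ℤ] :=
  mapDomainRingHom ℂ ((AddMonoidHom.mulLeft (N : ℤ)).prodMap (AddMonoidHom.mulLeft (M : ℤ)))

@[simp]
theorem dilate_single (N M : ℕ) (a b : ℤ) (r : ℂ) :
    dilate N M (single (a, b) r) = single ((N : ℤ) * a, (M : ℤ) * b) r := by
  simp [dilate]

theorem dilate_single_zero (N M : ℕ) (r : ℂ) : dilate N M (single 0 r) = single 0 r := by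
  rw [← Prod.mk_zero_zero, dilate_single, mul_zero, mul_zero]

theorem conjRev_dilate (N M : ℕ) (x : ℂ[ℤ × ℤ]) :
    conjRev (dilate N M x) = dilate N M (conjRev x) := by
  induction x using AddMonoidAlgebra.induction_linear with
  | zero => simp
  | add x y hx hy => simp only [map_add, hx, hy]
  | single g r => obtain ⟨a, b⟩ := g; simp

def IsKronecker (L K N M : ℕ) (W U P : ℕ → ℕ → ℂ) : Prop :=
  ∀ l < L, ∀ k < K, ∀ n < N, ∀ m < M, W (l * N + n) (k * M + m) = U l k * P n m

def IsUnimodular (N M : ℕ) (W : ℕ → ℕ → ℂ) : Prop :=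
  ∀ n < N, ∀ m < M, ‖W n m‖ = 1

theorem laurent_neg (N M : ℕ) (W : ℕ → ℕ → ℂ) :
    laurent N M (fun n m => -W n m) = -laurent N M W := by
  simp [laurent, single_neg]

theorem laurent_add_rows (H H' C : ℕ) (W : ℕ → ℕ → ℂ) :
    laurent (H + H') C W
      = laurent H C W + single ((H : ℤ), 0) 1 * laurent H' C (fun x y => W (H + x) y) := by
  simp only [laurent, sum_range_add, mul_sum, single_mul_single, one_mul]
  push_cast
  simp

theorem laurent_of_isKronecker {L K N M : ℕ} {W U P : ℕ → ℕ → ℂ}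
    (h : IsKronecker L K N M W U P) :
    laurent (L * N) (K * M) W = dilate N M (laurent L K U) * laurent N M P := by
  simp only [laurent, map_sum, dilate_single, sum_mul_sum, single_mul_single, sum_range_mul]
  refine sum_congr rfl fun l hl => sum_congr rfl fun n hn =>
    sum_congr rfl fun k hk => sum_congr rfl fun m hm => ?_
  rw [h l (mem_range.1 hl) k (mem_range.1 hk) n (mem_range.1 hn) m (mem_range.1 hm)]
  push_cast
  congr 2 <;> ring

theorem laurent_conj_reverse (N M : ℕ) (P : ℕ → ℕ → ℂ) :
    laurent N M (fun n m => conj (P (N - 1 - n) (M - 1 - m)))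
      = single ((N : ℤ) - 1, (M : ℤ) - 1) 1 * conjRev (laurent N M P) := by
  simp only [laurent, map_sum, conjRev_single, mul_sum, single_mul_single, one_mul]
  rw [← sum_range_reflect]
  refine sum_congr rfl fun n hn => ?_
  rw [← sum_range_reflect]
  refine sum_congr rfl fun m hm => ?_
  have hn := mem_range.1 hn
  have hm := mem_range.1 hm
  rw [show N - 1 - (N - 1 - n) = n by omega, show M - 1 - (M - 1 - m) = m by omega]
  congr 1
  ext <;> simp <;> omega

theorem sum_range_ite_natCast_eq {β : Type*} [AddCommMonoid β] (N : ℕ) (t : ℤ) (f : ℕ → β) :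
    ∑ n ∈ range N, (if (n : ℤ) = t then f n else 0)
      = if 0 ≤ t ∧ t < N then f t.toNat else 0 := by
  split_ifs with ht
  · rw [sum_eq_single_of_mem t.toNat (mem_range.2 (by omega)) fun n _ hn => if_neg (by omega),
      if_pos (by omega)]
  · exact sum_eq_zero fun n hn => if_neg (by have := mem_range.1 hn; omega)

theorem coeff_laurent_mul_conjRev (N M : ℕ) (W : ℕ → ℕ → ℂ) (τn τm : ℤ) :
    (laurent N M W * conjRev (laurent N M W)).coeff (-τn, -τm) = aacf2 N M W τn τm := by
  simp only [laurent, map_sum, conjRev_single, sum_mul_sum, single_mul_single, coeff_sum,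
    coeff_single, Finsupp.coe_finsetSum, Finset.sum_apply, Finsupp.single_apply]
  refine sum_congr rfl fun n _ => ?_
  rw [sum_comm]
  refine sum_congr rfl fun m _ => ?_
  have hshift : ∀ n' m' : ℕ, (((n : ℤ), (m : ℤ)) + -((n' : ℤ), (m' : ℤ)) = (-τn, -τm)) ↔
      ((n' : ℤ) = n + τn ∧ (m' : ℤ) = m + τm) := fun n' m' => by
    simp only [Prod.ext_iff, Prod.fst_add, Prod.snd_add, Prod.fst_neg, Prod.snd_neg]
    omega
  simp only [hshift, ite_and, sum_ite_irrel, sum_const_zero, sum_range_ite_natCast_eq]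

theorem aacf2_eq_zero_of_not_abs_le {N M : ℕ} (W : ℕ → ℕ → ℂ) {τn τm : ℤ}
    (h : ¬(|τn| ≤ (N : ℤ) - 1 ∧ |τm| ≤ (M : ℤ) - 1)) : aacf2 N M W τn τm = 0 := by
  refine sum_eq_zero fun n hn => sum_eq_zero fun m hm => if_neg ?_
  have := mem_range.1 hn
  have := mem_range.1 hm
  rw [abs_le, abs_le] at h
  omega

theorem isGolayArrayPair_iff (N M : ℕ) (U V : ℕ → ℕ → ℂ) :
    IsGolayArrayPair N M U V ↔ ∃ c : ℂ,
      laurent N M U * conjRev (laurent N M U) + laurent N M V * conjRev (laurent N M V)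
        = single 0 c := by
  constructor
  · intro h
    set S := laurent N M U * conjRev (laurent N M U) + laurent N M V * conjRev (laurent N M V)
    refine ⟨S.coeff 0, ext <| Finsupp.ext fun g => ?_⟩
    obtain ⟨τn, τm, rfl⟩ : ∃ τn τm : ℤ, g = (-τn, -τm) := ⟨-g.1, -g.2, by simp⟩
    rw [coeff_single, Finsupp.single_apply]
    split_ifs with h0
    · rw [h0]
    have hτ : ¬(τn = 0 ∧ τm = 0) := by simpa [Prod.ext_iff, eq_comm] using h0
    rw [coeff_add, Finsupp.add_apply, coeff_laurent_mul_conjRev, coeff_laurent_mul_conjRev]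
    by_cases hin : |τn| ≤ (N : ℤ) - 1 ∧ |τm| ≤ (M : ℤ) - 1
    · exact h τn τm hin.1 hin.2 hτ
    · rw [aacf2_eq_zero_of_not_abs_le U hin, aacf2_eq_zero_of_not_abs_le V hin, add_zero]
  · rintro ⟨c, hc⟩ τn τm - - hτ
    rw [← coeff_laurent_mul_conjRev, ← coeff_laurent_mul_conjRev, ← Finsupp.add_apply,
      ← coeff_add, hc, coeff_single, Finsupp.single_apply, if_neg]
    simpa [Prod.ext_iff, eq_comm] using hτ

theorem laurent_stack_of_isKronecker {L K N M : ℕ} {W U U' P Q : ℕ → ℕ → ℂ}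
    (htop : IsKronecker L K N M W U P)
    (hbot : IsKronecker L K N M (fun x y => W (L * N + x) y) U'
      (fun n m => conj (Q (N - 1 - n) (M - 1 - m)))) :
    laurent (2 * L * N) (K * M) W = dilate N M (laurent L K U) * laurent N M P
      + single ((L * N : ℕ) + ((N : ℤ) - 1), (M : ℤ) - 1) 1 * dilate N M (laurent L K U')
        * conjRev (laurent N M Q) := by
  rw [show 2 * L * N = L * N + L * N by ring, laurent_add_rows, laurent_of_isKronecker htop,
    laurent_of_isKronecker hbot, laurent_conj_reverse, mul_left_comm (dilate N M _), ← mul_assoc,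
    ← mul_assoc, single_mul_single, Prod.mk_add_mk, zero_add, one_mul]

namespace IsUnimodular

theorem of_isKronecker {L K N M : ℕ} {W U P : ℕ → ℕ → ℂ} (h : IsKronecker L K N M W U P)
    (hU : IsUnimodular L K U) (hP : IsUnimodular N M P) : IsUnimodular (L * N) (K * M) W := by
  intro x hx y hy
  have hN : 0 < N := Nat.pos_of_ne_zero (by rintro rfl; simp at hx)
  have hM : 0 < M := Nat.pos_of_ne_zero (by rintro rfl; simp at hy)
  rw [← Nat.div_add_mod' x N, ← Nat.div_add_mod' y M,
    h _ (Nat.div_lt_of_lt_mul (by rwa [mul_comm])) _ (Nat.div_lt_of_lt_mul (by rwa [mul_comm]))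
      _ (Nat.mod_lt x hN) _ (Nat.mod_lt y hM), norm_mul,
    hU _ (Nat.div_lt_of_lt_mul (by rwa [mul_comm])) _ (Nat.div_lt_of_lt_mul (by rwa [mul_comm])),
    hP _ (Nat.mod_lt x hN) _ (Nat.mod_lt y hM), one_mul]

theorem of_add_rows {H H' C : ℕ} {W : ℕ → ℕ → ℂ} (h : IsUnimodular H C W)
    (h' : IsUnimodular H' C (fun x y => W (H + x) y)) : IsUnimodular (H + H') C W := by
  intro x hx y hy
  by_cases hxH : x < H
  · exact h x hxH y hy
  · simpa [Nat.add_sub_cancel' (not_lt.1 hxH)] using h' (x - H) (by omega) y hy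

theorem neg {N M : ℕ} {W : ℕ → ℕ → ℂ} (h : IsUnimodular N M W) :
    IsUnimodular N M (fun n m => -W n m) := fun n hn m hm => by
  rw [norm_neg, h n hn m hm]

theorem conj_reverse {N M : ℕ} {W : ℕ → ℕ → ℂ} (h : IsUnimodular N M W) :
    IsUnimodular N M (fun n m => conj (W (N - 1 - n) (M - 1 - m))) := fun n hn m hm => by
  rw [Complex.norm_conj, h _ (by omega) _ (by omega)]

end IsUnimodular

theorem golay_array_pair_closure_expansion_general (L K N M : ℕ)
    (U V WPA WPB WA WB : ℕ → ℕ → ℂ)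
    (hU : ∀ l < L, ∀ k < K, ‖U l k‖ = 1)
    (hV : ∀ l < L, ∀ k < K, ‖V l k‖ = 1)
    (hGolayUV : IsGolayArrayPair L K U V)
    (hWPA : ∀ n < N, ∀ m < M, ‖WPA n m‖ = 1)
    (hWPB : ∀ n < N, ∀ m < M, ‖WPB n m‖ = 1)
    (hGolayP : IsGolayArrayPair N M WPA WPB)
    (hA1 : ∀ l < L, ∀ k < K, ∀ n < N, ∀ m < M,
      WA (l * N + n) (k * M + m) = U l k * WPA n m)
    (hA2 : ∀ l < L, ∀ k < K, ∀ n < N, ∀ m < M,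
      WA (L * N + l * N + n) (k * M + m) =
        -(V l k * (starRingEnd ℂ) (WPB (N - 1 - n) (M - 1 - m))))
    (hB1 : ∀ l < L, ∀ k < K, ∀ n < N, ∀ m < M,
      WB (l * N + n) (k * M + m) = U l k * WPB n m)
    (hB2 : ∀ l < L, ∀ k < K, ∀ n < N, ∀ m < M,
      WB (L * N + l * N + n) (k * M + m) =
        V l k * (starRingEnd ℂ) (WPA (N - 1 - n) (M - 1 - m))) :
    (∀ n < 2 * L * N, ∀ m < K * M,
        ‖WA n m‖ = 1 ∧ ‖WB n m‖ = 1) ∧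
      IsGolayArrayPair (2 * L * N) (K * M) WA WB := by
  have hA2' : IsKronecker L K N M (fun x y => WA (L * N + x) y) (fun l k => -V l k)
      (fun n m => conj (WPB (N - 1 - n) (M - 1 - m))) := fun l hl k hk n hn m hm => by
    simpa [← add_assoc] using hA2 l hl k hk n hn m hm
  have hB2' : IsKronecker L K N M (fun x y => WB (L * N + x) y) V
      (fun n m => conj (WPA (N - 1 - n) (M - 1 - m))) := fun l hl k hk n hn m hm => by
    simpa [← add_assoc] using hB2 l hl k hk n hn m hm
  have hrows : 2 * L * N = L * N + L * N := by ring
  refine ⟨fun x hx y hy => ⟨?_, ?_⟩, ?_⟩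
  · rw [hrows] at hx
    exact IsUnimodular.of_add_rows (.of_isKronecker hA1 hU hWPA)
      (.of_isKronecker hA2' (IsUnimodular.neg hV) (IsUnimodular.conj_reverse hWPB)) x hx y hy
  · rw [hrows] at hx
    exact IsUnimodular.of_add_rows (.of_isKronecker hB1 hU hWPB)
      (.of_isKronecker hB2' hV (IsUnimodular.conj_reverse hWPA)) x hx y hy
  rw [isGolayArrayPair_iff] at hGolayUV hGolayP ⊢
  obtain ⟨c, hc⟩ := hGolayUV
  obtain ⟨d, hd⟩ := hGolayP
  refine ⟨c * d, ?_⟩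
  rw [laurent_stack_of_isKronecker hA1 hA2', laurent_stack_of_isKronecker hB1 hB2', laurent_neg,
    map_neg, mul_neg, neg_mul, ← sub_eq_add_neg,
    mul_map_add_mul_map_expansion (R := ℂ[ℤ × ℤ]) conjRev conjRev_involutive
      (single_one_mul_conjRev _),
    conjRev_dilate, conjRev_dilate, ← map_mul, ← map_mul, ← map_add, hc, hd, dilate_single_zero,
    single_mul_single, add_zero]

/-- Golay-array-pair closure under two-dimensional expansion: expanding a Golay
complementary array pair of unimodular protoarray weights by a Golay complementary
array pair of unimodular expanders yields again a Golay complementary array pair of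
unimodular `2LN × KM` matrices. -/
theorem golay_array_pair_closure_expansion (L K N M : ℕ)
    (hL : 1 ≤ L) (hK : 1 ≤ K) (hN : 1 ≤ N) (hM : 1 ≤ M)
    (U V WPA WPB WA WB : ℕ → ℕ → ℂ)
    (hU : ∀ l < L, ∀ k < K, ‖U l k‖ = 1)
    (hV : ∀ l < L, ∀ k < K, ‖V l k‖ = 1)
    (hGolayUV : IsGolayArrayPair L K U V)
    (hWPA : ∀ n < N, ∀ m < M, ‖WPA n m‖ = 1)
    (hWPB : ∀ n < N, ∀ m < M, ‖WPB n m‖ = 1)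
    (hGolayP : IsGolayArrayPair N M WPA WPB)
    (hA1 : ∀ l < L, ∀ k < K, ∀ n < N, ∀ m < M,
      WA (l * N + n) (k * M + m) = U l k * WPA n m)
    (hA2 : ∀ l < L, ∀ k < K, ∀ n < N, ∀ m < M,
      WA (L * N + l * N + n) (k * M + m) =
        -(V l k * (starRingEnd ℂ) (WPB (N - 1 - n) (M - 1 - m))))
    (hB1 : ∀ l < L, ∀ k < K, ∀ n < N, ∀ m < M,
      WB (l * N + n) (k * M + m) = U l k * WPB n m)
    (hB2 : ∀ l < L, ∀ k < K, ∀ n < N, ∀ m < M,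
      WB (L * N + l * N + n) (k * M + m) =
        V l k * (starRingEnd ℂ) (WPA (N - 1 - n) (M - 1 - m))) :
    (∀ n < 2 * L * N, ∀ m < K * M,
        ‖WA n m‖ = 1 ∧ ‖WB n m‖ = 1) ∧
      IsGolayArrayPair (2 * L * N) (K * M) WA WB :=
  golay_array_pair_closure_expansion_general L K N M U V WPA WPB WA WB hU hV hGolayUV hWPA hWPB
    hGolayP hA1 hA2 hB1 hB2
end
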